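/- Let K_t, θ_t and the Kolmogorov density p(x;t,y) := (√3/(π t²))^d · exp( −(1/2)·|K_t^{-1/2}(y − θ_t(x))|² ) be as in the Kolmogorov example. Then there exists a constant C ≥ 1, depending only on d, such that for each i ∈ {1,2}, all t > 0 and all x, y ∈ ℝ^{2d}: | ∇_{x_i} p(x;t,y) | ≤ (C / t^{(2i−1)/2}) · (√3/(π t²))^d · exp( −C^{-1}·|𝕋_t^{-1}(y − θ_t(x))|² ). -/

import Mathlib

open MeasureTheory Real Matrix

noncomputable section

/-- Points of `ℝ^{2d}`, split into the two `ℝ^d`-components. -/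
abbrev Vec (d : ℕ) := EuclideanSpace ℝ (Fin d)

/-- Coordinates of a point of `ℝ^{2d} = ℝ^d × ℝ^d`. -/
def toCoord {d : ℕ} (v : Vec d × Vec d) : Fin d ⊕ Fin d → ℝ :=
  Sum.elim (fun i => v.1 i) (fun i => v.2 i)

/-- The Kolmogorov covariance matrix: block matrix with upper-left block `t·I`,
upper-right and lower-left blocks `(t²/2)·I`, lower-right block `(t³/3)·I`. -/
def kolK (d : ℕ) (t : ℝ) : Matrix (Fin d ⊕ Fin d) (Fin d ⊕ Fin d) ℝ :=
  Matrix.fromBlocks (t • 1) ((t ^ 2 / 2) • 1) ((t ^ 2 / 2) • 1) ((t ^ 3 / 3) • 1)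

/-- `θ_t(x) := (x₁, x₂ + t·x₁)`. -/
def kolTheta {d : ℕ} (t : ℝ) (x : Vec d × Vec d) : Vec d × Vec d :=
  (x.1, x.2 + t • x.1)

/-- The Kolmogorov density
`p(x;t,y) := (√3/(π t²))^d exp(-(1/2)|K_t^{-1/2}(y - θ_t(x))|²)`; here we use the exact
identity `|K_t^{-1/2} w|² = ⟨K_t⁻¹ w, w⟩` for the positive-definite square root. -/
def kolDensity (d : ℕ) (x : Vec d × Vec d) (t : ℝ) (y : Vec d × Vec d) : ℝ :=
  (Real.sqrt 3 / (Real.pi * t ^ 2)) ^ d *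
    Real.exp (-(1 / 2) *
      dotProduct ((kolK d t)⁻¹.mulVec (toCoord (y - kolTheta t x)))
        (toCoord (y - kolTheta t x)))

/-- `|𝕋_t⁻¹ v|²` for `v ∈ ℝ^{2d}`. -/
def TinvSq {d : ℕ} (t : ℝ) (v : Vec d × Vec d) : ℝ := ‖v.1‖ ^ 2 / t + ‖v.2‖ ^ 2 / t ^ 3

/-!
With `w = y - θ_t x`, the exponent of the density is
`-(2/t)|w₁|² + (6/t²)⟪w₁, w₂⟫ - (6/t³)|w₂|²`. In the scaled variables `p = |w₁|/√t`,
`q = |w₂|/t^{3/2}` this is a negative definite form, at most `-(p² + q²)/4`. Differentiating in `x₁`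
(resp. `x₂`) brings down a factor `t^{-1/2}` (resp. `t^{-3/2}`) times a linear function of `(p, q)`,
and a linear function times `exp(-(p² + q²)/4)` is absorbed by `96 exp(-(p² + q²)/96)`.
-/

theorem one_add_mul_exp_neg_le {c : ℝ} (hc₀ : 0 < c) (hc₁ : c ≤ 1) (S : ℝ) :
    (1 + S) * exp (-(2 * c * S)) ≤ c⁻¹ * exp (-(c * S)) := by
  have h₁ : 1 + S ≤ c⁻¹ * (c * S + 1) := by
    rw [mul_add, ← mul_assoc, inv_mul_cancel₀ hc₀.ne', one_mul, mul_one, add_comm]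
    linarith [one_le_inv_iff₀.2 ⟨hc₀, hc₁⟩]
  calc (1 + S) * exp (-(2 * c * S)) ≤ c⁻¹ * exp (c * S) * exp (-(2 * c * S)) := by
        gcongr
        exact h₁.trans (by gcongr; exact add_one_le_exp _)
    _ = c⁻¹ * exp (-(c * S)) := by rw [mul_assoc, ← exp_add]; ring_nf

section PairQuadForm

variable {E : Type*} [NormedAddCommGroup E] [InnerProductSpace ℝ E]

def pairQuadForm (α β γ : ℝ) (w₁ w₂ : E) : ℝ :=
  α * ‖w₁‖ ^ 2 + β * inner ℝ w₁ w₂ + γ * ‖w₂‖ ^ 2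

theorem hasFDerivAt_exp_pairQuadForm (α β γ s r : ℝ) (u v z : E) :
    HasFDerivAt (fun z => exp (pairQuadForm α β γ (u - s • z) (v - r • z)))
      (exp (pairQuadForm α β γ (u - s • z) (v - r • z)) •
        innerSL ℝ (-((2 * α * s + β * r) • (u - s • z) + (β * s + 2 * γ * r) • (v - r • z))))
      z := by
  have h₁ : HasFDerivAt (fun z : E => u - s • z) (-(s • ContinuousLinearMap.id ℝ E)) z :=
    ((hasFDerivAt_id z).const_smul s).const_sub u
  have h₂ : HasFDerivAt (fun z : E => v - r • z) (-(r • ContinuousLinearMap.id ℝ E)) z :=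
    ((hasFDerivAt_id z).const_smul r).const_sub v
  have hQ : HasFDerivAt (fun z => pairQuadForm α β γ (u - s • z) (v - r • z))
      (innerSL ℝ (-((2 * α * s + β * r) • (u - s • z) + (β * s + 2 * γ * r) • (v - r • z)))) z := by
    have hsum := (((h₁.inner ℝ h₁).const_mul α).add ((h₁.inner ℝ h₂).const_mul β)).add
      ((h₂.inner ℝ h₂).const_mul γ)
    simp only [real_inner_self_eq_norm_sq] at hsum
    refine hsum.congr_fderiv ?_
    ext e
    simp only [_root_.add_apply, _root_.smul_apply, ContinuousLinearMap.comp_apply,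
      ContinuousLinearMap.prod_apply, _root_.neg_apply, ContinuousLinearMap.id_apply,
      fderivInnerCLM_apply, innerSL_apply_apply, inner_neg_left, inner_neg_right, inner_add_right,
      inner_sub_left, inner_sub_right, real_inner_smul_left, real_inner_smul_right,
      real_inner_comm e, smul_eq_mul]
    ring
  exact hQ.exp

theorem norm_fderiv_const_mul_exp_pairQuadForm_le {A : ℝ} (hA : 0 ≤ A) (α β γ s r : ℝ)
    (u v z : E) :
    ‖fderiv ℝ (fun z => A * exp (pairQuadForm α β γ (u - s • z) (v - r • z))) z‖ ≤
      A * exp (pairQuadForm α β γ (u - s • z) (v - r • z)) *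
        (|2 * α * s + β * r| * ‖u - s • z‖ + |β * s + 2 * γ * r| * ‖v - r • z‖) := by
  rw [((hasFDerivAt_exp_pairQuadForm α β γ s r u v z).const_mul A).fderiv, smul_smul, norm_smul,
    innerSL_apply_norm, Real.norm_of_nonneg (by positivity), norm_neg]
  gcongr
  refine (norm_add_le _ _).trans ?_
  rw [norm_smul, norm_smul, Real.norm_eq_abs, Real.norm_eq_abs]

theorem kol_pairQuadForm_le {t : ℝ} (ht : 0 < t) (w₁ w₂ : E) :
    pairQuadForm (-(2 / t)) (6 / t ^ 2) (-(6 / t ^ 3)) w₁ w₂ ≤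
      -(‖w₁‖ ^ 2 / t + ‖w₂‖ ^ 2 / t ^ 3) / 4 := by
  have hI : inner ℝ w₁ w₂ ≤ ‖w₁‖ * ‖w₂‖ := real_inner_le_norm w₁ w₂
  -- Cauchy–Schwarz disposes of the cross term; the remaining binary form in `(t‖w₁‖, ‖w₂‖)` is
  -- positive definite since `24² < 4 · 7 · 23`.
  have hgap : -(‖w₁‖ ^ 2 / t + ‖w₂‖ ^ 2 / t ^ 3) / 4 -
      pairQuadForm (-(2 / t)) (6 / t ^ 2) (-(6 / t ^ 3)) w₁ w₂ =
      ((7 * (t * ‖w₁‖) ^ 2 - 24 * (t * ‖w₁‖) * ‖w₂‖ + 23 * ‖w₂‖ ^ 2) +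
        24 * t * (‖w₁‖ * ‖w₂‖ - inner ℝ w₁ w₂)) / (4 * t ^ 3) := by
    unfold pairQuadForm
    field_simp
    ring
  have hnum : 0 ≤ (7 * (t * ‖w₁‖) ^ 2 - 24 * (t * ‖w₁‖) * ‖w₂‖ + 23 * ‖w₂‖ ^ 2) +
      24 * t * (‖w₁‖ * ‖w₂‖ - inner ℝ w₁ w₂) := by
    nlinarith [sq_nonneg (7 * (t * ‖w₁‖) - 12 * ‖w₂‖), sq_nonneg ‖w₂‖,
      mul_nonneg ht.le (sub_nonneg.2 hI)]
  linarith [div_nonneg hnum (by positivity : (0 : ℝ) ≤ 4 * t ^ 3)]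

theorem exp_kol_pairQuadForm_mul_le {t : ℝ} (ht : 0 < t) (w₁ w₂ : E) {k₁ k₂ : ℝ}
    (hk₁ : k₁ ∈ Set.Icc (0 : ℝ) 12) (hk₂ : k₂ ∈ Set.Icc (0 : ℝ) 12) :
    exp (pairQuadForm (-(2 / t)) (6 / t ^ 2) (-(6 / t ^ 3)) w₁ w₂) *
        (k₁ * (‖w₁‖ / √t) + k₂ * (‖w₂‖ / √t ^ 3)) ≤
      96 * exp (-96⁻¹ * (‖w₁‖ ^ 2 / t + ‖w₂‖ ^ 2 / t ^ 3)) := by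
  set p := ‖w₁‖ / √t
  set q := ‖w₂‖ / √t ^ 3
  have hp : 0 ≤ p := by positivity
  have hq : 0 ≤ q := by positivity
  have hS : ‖w₁‖ ^ 2 / t + ‖w₂‖ ^ 2 / t ^ 3 = p ^ 2 + q ^ 2 := by
    have h3 : (√t ^ 3) ^ 2 = t ^ 3 := by rw [← pow_mul, mul_comm, pow_mul, sq_sqrt ht.le]
    rw [div_pow, div_pow, sq_sqrt ht.le, h3]
  rw [hS]
  have hlin : k₁ * p + k₂ * q ≤ 12 * (1 + (p ^ 2 + q ^ 2)) := by
    nlinarith [sq_nonneg (p - 1), sq_nonneg (q - 1), mul_le_mul_of_nonneg_right hk₁.2 hp,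
      mul_le_mul_of_nonneg_right hk₂.2 hq]
  have hexp : pairQuadForm (-(2 / t)) (6 / t ^ 2) (-(6 / t ^ 3)) w₁ w₂ ≤
      -(2 * 8⁻¹ * (p ^ 2 + q ^ 2)) := by
    linarith [kol_pairQuadForm_le ht w₁ w₂]
  calc exp (pairQuadForm (-(2 / t)) (6 / t ^ 2) (-(6 / t ^ 3)) w₁ w₂) * (k₁ * p + k₂ * q)
      ≤ exp (-(2 * 8⁻¹ * (p ^ 2 + q ^ 2))) * (12 * (1 + (p ^ 2 + q ^ 2))) := by
        gcongr
        nlinarith [mul_nonneg hk₁.1 hp, mul_nonneg hk₂.1 hq]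
    _ = 12 * ((1 + (p ^ 2 + q ^ 2)) * exp (-(2 * 8⁻¹ * (p ^ 2 + q ^ 2)))) := by ring
    _ ≤ 12 * (8⁻¹⁻¹ * exp (-(8⁻¹ * (p ^ 2 + q ^ 2)))) := by
        gcongr 12 * ?_
        exact one_add_mul_exp_neg_le (c := 8⁻¹) (by norm_num) (by norm_num) _
    _ = 96 * exp (-(8⁻¹ * (p ^ 2 + q ^ 2))) := by rw [inv_inv]; ring
    _ ≤ 96 * exp (-96⁻¹ * (p ^ 2 + q ^ 2)) := by
        gcongr
        nlinarith [sq_nonneg p, sq_nonneg q]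

end PairQuadForm

theorem kolK_inv (d : ℕ) {t : ℝ} (ht : t ≠ 0) :
    (kolK d t)⁻¹ =
      fromBlocks ((4 / t) • 1) ((-6 / t ^ 2) • 1) ((-6 / t ^ 2) • 1) ((12 / t ^ 3) • 1) := by
  apply inv_eq_right_inv
  rw [kolK, fromBlocks_multiply, ← fromBlocks_one]
  simp only [smul_mul_smul, one_mul, ← add_smul]
  congr 1
  · rw [show t * (4 / t) + t ^ 2 / 2 * (-6 / t ^ 2) = 1 by field_simp; ring, one_smul]
  · rw [show t * (-6 / t ^ 2) + t ^ 2 / 2 * (12 / t ^ 3) = 0 by field_simp; ring, zero_smul]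
  · rw [show t ^ 2 / 2 * (4 / t) + t ^ 3 / 3 * (-6 / t ^ 2) = 0 by field_simp; ring, zero_smul]
  · rw [show t ^ 2 / 2 * (-6 / t ^ 2) + t ^ 3 / 3 * (12 / t ^ 3) = 1 by field_simp; ring, one_smul]

theorem kolK_inv_mulVec_dotProduct {d : ℕ} {t : ℝ} (ht : t ≠ 0) (w : Vec d × Vec d) :
    (kolK d t)⁻¹ *ᵥ toCoord w ⬝ᵥ toCoord w =
      4 / t * ‖w.1‖ ^ 2 - 12 / t ^ 2 * inner ℝ w.1 w.2 + 12 / t ^ 3 * ‖w.2‖ ^ 2 := by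
  rw [kolK_inv d ht, toCoord, fromBlocks_mulVec, ← real_inner_self_eq_norm_sq,
    ← real_inner_self_eq_norm_sq]
  simp only [smul_mulVec, one_mulVec, dotProduct, Fintype.sum_sum_type, Sum.elim_inl,
    Sum.elim_inr, Pi.add_apply, Pi.smul_apply, smul_eq_mul, PiLp.inner_apply, RCLike.inner_apply,
    conj_trivial, Finset.mul_sum, Sum.elim_comp_inl, Sum.elim_comp_inr, ← Finset.sum_add_distrib,
    ← Finset.sum_sub_distrib]
  exact Finset.sum_congr rfl fun i _ => by ring

theorem kolDensity_eq (d : ℕ) {t : ℝ} (ht : t ≠ 0) (x y : Vec d × Vec d) :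
    kolDensity d x t y = (√3 / (π * t ^ 2)) ^ d *
      exp (pairQuadForm (-(2 / t)) (6 / t ^ 2) (-(6 / t ^ 3))
        (y - kolTheta t x).1 (y - kolTheta t x).2) := by
  rw [kolDensity, kolK_inv_mulVec_dotProduct ht, pairQuadForm]
  congr 2
  ring

theorem norm_fderiv_kolDensity_fst_le {d : ℕ} {t : ℝ} (ht : 0 < t) (x y : Vec d × Vec d) :
    ‖fderiv ℝ (fun z : Vec d => kolDensity d (z, x.2) t y) x.1‖ ≤
      (√3 / (π * t ^ 2)) ^ d / √t *
        (exp (pairQuadForm (-(2 / t)) (6 / t ^ 2) (-(6 / t ^ 3))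
            (y - kolTheta t x).1 (y - kolTheta t x).2) *
          (2 * (‖(y - kolTheta t x).1‖ / √t) + 6 * (‖(y - kolTheta t x).2‖ / √t ^ 3))) := by
  have hfun : (fun z : Vec d => kolDensity d (z, x.2) t y) = fun z =>
      (√3 / (π * t ^ 2)) ^ d * exp (pairQuadForm (-(2 / t)) (6 / t ^ 2) (-(6 / t ^ 3))
        (y.1 - (1 : ℝ) • z) ((y.2 - x.2) - t • z)) := by
    funext z
    simp [kolDensity_eq d ht.ne', kolTheta, sub_add_eq_sub_sub]
  have hw : (y - kolTheta t x).1 = y.1 - (1 : ℝ) • x.1 ∧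
      (y - kolTheta t x).2 = (y.2 - x.2) - t • x.1 := by
    simp [kolTheta, sub_add_eq_sub_sub]
  rw [hfun, hw.1, hw.2]
  refine (norm_fderiv_const_mul_exp_pairQuadForm_le (by positivity) _ _ _ _ _ _ _ _).trans_eq ?_
  have hc₁ : |2 * -(2 / t) * 1 + 6 / t ^ 2 * t| = 2 / t := by
    rw [show 2 * -(2 / t) * 1 + 6 / t ^ 2 * t = 2 / t by field_simp; ring,
      abs_of_pos (by positivity)]
  have hc₂ : |6 / t ^ 2 * 1 + 2 * -(6 / t ^ 3) * t| = 6 / t ^ 2 := by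
    rw [show 6 / t ^ 2 * 1 + 2 * -(6 / t ^ 3) * t = -(6 / t ^ 2) by field_simp; ring, abs_neg,
      abs_of_pos (by positivity)]
  rw [hc₁, hc₂]
  obtain ⟨σ, hσ, rfl⟩ : ∃ σ, 0 < σ ∧ t = σ ^ 2 := ⟨√t, sqrt_pos.2 ht, (sq_sqrt ht.le).symm⟩
  rw [sqrt_sq hσ.le]
  field_simp

theorem norm_fderiv_kolDensity_snd_le {d : ℕ} {t : ℝ} (ht : 0 < t) (x y : Vec d × Vec d) :
    ‖fderiv ℝ (fun z : Vec d => kolDensity d (x.1, z) t y) x.2‖ ≤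
      (√3 / (π * t ^ 2)) ^ d / √t ^ 3 *
        (exp (pairQuadForm (-(2 / t)) (6 / t ^ 2) (-(6 / t ^ 3))
            (y - kolTheta t x).1 (y - kolTheta t x).2) *
          (6 * (‖(y - kolTheta t x).1‖ / √t) + 12 * (‖(y - kolTheta t x).2‖ / √t ^ 3))) := by
  have hfun : (fun z : Vec d => kolDensity d (x.1, z) t y) = fun z =>
      (√3 / (π * t ^ 2)) ^ d * exp (pairQuadForm (-(2 / t)) (6 / t ^ 2) (-(6 / t ^ 3))
        ((y.1 - x.1) - (0 : ℝ) • z) ((y.2 - t • x.1) - (1 : ℝ) • z)) := by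
    funext z
    simp only [kolDensity_eq d ht.ne', kolTheta, Prod.fst_sub, Prod.snd_sub, zero_smul, one_smul,
      sub_zero, sub_add_eq_sub_sub, sub_right_comm]
  have hw : (y - kolTheta t x).1 = (y.1 - x.1) - (0 : ℝ) • x.2 ∧
      (y - kolTheta t x).2 = (y.2 - t • x.1) - (1 : ℝ) • x.2 := by
    simp only [kolTheta, Prod.fst_sub, Prod.snd_sub, zero_smul, one_smul, sub_zero,
      sub_add_eq_sub_sub, sub_right_comm, and_self]
  rw [hfun, hw.1, hw.2]
  refine (norm_fderiv_const_mul_exp_pairQuadForm_le (by positivity) _ _ _ _ _ _ _ _).trans_eq ?_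
  have hc₁ : |2 * -(2 / t) * 0 + 6 / t ^ 2 * 1| = 6 / t ^ 2 := by
    rw [show 2 * -(2 / t) * 0 + 6 / t ^ 2 * 1 = 6 / t ^ 2 by ring, abs_of_pos (by positivity)]
  have hc₂ : |6 / t ^ 2 * 0 + 2 * -(6 / t ^ 3) * 1| = 12 / t ^ 3 := by
    rw [show 6 / t ^ 2 * 0 + 2 * -(6 / t ^ 3) * 1 = -(12 / t ^ 3) by ring, abs_neg,
      abs_of_pos (by positivity)]
  rw [hc₁, hc₂]
  obtain ⟨σ, hσ, rfl⟩ : ∃ σ, 0 < σ ∧ t = σ ^ 2 := ⟨√t, sqrt_pos.2 ht, (sq_sqrt ht.le).symm⟩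
  rw [sqrt_sq hσ.le]
  field_simp

/-- **Gradient bounds for the Kolmogorov density.**
There is `C ≥ 1`, depending only on `d`, such that for each `i ∈ {1,2}`, all `t > 0` and all
`x, y ∈ ℝ^{2d}`:
`|∇_{x_i} p(x;t,y)| ≤ (C / t^{(2i-1)/2}) (√3/(π t²))^d exp(-C⁻¹ |𝕋_t⁻¹(y-θ_t(x))|²)`. -/
theorem kolmogorov_density_gradient_bounds (d : ℕ) :
    ∃ C : ℝ, 1 ≤ C ∧
      ∀ (t : ℝ) (x y : Vec d × Vec d), 0 < t →
        ‖fderiv ℝ (fun z : Vec d => kolDensity d (z, x.2) t y) x.1‖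
            ≤ C / t ^ ((1 : ℝ) / 2) * (Real.sqrt 3 / (Real.pi * t ^ 2)) ^ d *
              Real.exp (-C⁻¹ * TinvSq t (y - kolTheta t x)) ∧
        ‖fderiv ℝ (fun z : Vec d => kolDensity d (x.1, z) t y) x.2‖
            ≤ C / t ^ ((3 : ℝ) / 2) * (Real.sqrt 3 / (Real.pi * t ^ 2)) ^ d *
              Real.exp (-C⁻¹ * TinvSq t (y - kolTheta t x)) := by
  refine ⟨96, by norm_num, fun t x y ht => ⟨?_, ?_⟩⟩
  · rw [rpow_div_two_eq_sqrt 1 ht.le, rpow_one]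
    refine (norm_fderiv_kolDensity_fst_le ht x y).trans ?_
    calc _ ≤ (√3 / (π * t ^ 2)) ^ d / √t * (96 * exp (-96⁻¹ * TinvSq t (y - kolTheta t x))) :=
          mul_le_mul_of_nonneg_left (exp_kol_pairQuadForm_mul_le ht _ _
            ⟨by norm_num, by norm_num⟩ ⟨by norm_num, by norm_num⟩) (by positivity)
      _ = _ := by ring
  · have h32 : t ^ ((3 : ℝ) / 2) = √t ^ 3 := by
      rw [rpow_div_two_eq_sqrt 3 ht.le]
      exact_mod_cast rpow_natCast √t 3
    rw [h32]
    refine (norm_fderiv_kolDensity_snd_le ht x y).trans ?_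
    calc _ ≤ (√3 / (π * t ^ 2)) ^ d / √t ^ 3 * (96 * exp (-96⁻¹ * TinvSq t (y - kolTheta t x))) :=
          mul_le_mul_of_nonneg_left (exp_kol_pairQuadForm_mul_le ht _ _
            ⟨by norm_num, by norm_num⟩ ⟨by norm_num, by norm_num⟩) (by positivity)
      _ = _ := by ring
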